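/- arXiv:2512.18302 — 4 statements merged into one kernel-verified Lean document; each statement's English description precedes it below -/
import Mathlib

section
/- Let G be a finite group and S_0 a generating k-tuple of G. For every g ∈ G, the fiber {(g_0|g_1,…,g_k) ∈ Σ'_k(G) : g_0 = g} has cardinality equal to |Γ'_k(G)|, the cardinality of the SAut(F_k)-orbit of S_0; in particular this cardinality is independent of g, and the push-forward under π_C(g_0|g_1,…,g_k) = g_0 of the uniform distribution on Σ'_k(G) is the uniform distribution on G. -/
noncomputable section

namespace PRA

open FreeGroup

variable {α : Type*} [DecidableEq α]

/-- The endomorphism of the free group sending `x_i ↦ x_j x_i` and fixing other generators. -/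
def lA (i j : α) : FreeGroup α →* FreeGroup α :=
  FreeGroup.lift fun p => if p = i then FreeGroup.of j * FreeGroup.of p else FreeGroup.of p

/-- The endomorphism of the free group sending `x_i ↦ x_j⁻¹ x_i` and fixing other generators. -/
def lB (i j : α) : FreeGroup α →* FreeGroup α :=
  FreeGroup.lift fun p => if p = i then (FreeGroup.of j)⁻¹ * FreeGroup.of p else FreeGroup.of p

/-- The endomorphism of the free group sending `x_i ↦ x_i x_j` and fixing other generators. -/
def rA (i j : α) : FreeGroup α →* FreeGroup α :=
  FreeGroup.lift fun p => if p = i then FreeGroup.of p * FreeGroup.of j else FreeGroup.of p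

/-- The endomorphism of the free group sending `x_i ↦ x_i x_j⁻¹` and fixing other generators. -/
def rB (i j : α) : FreeGroup α →* FreeGroup α :=
  FreeGroup.lift fun p => if p = i then FreeGroup.of p * (FreeGroup.of j)⁻¹ else FreeGroup.of p

lemma lBA (i j : α) (h : i ≠ j) : (lB i j).comp (lA i j) = MonoidHom.id _ := by
  ext p
  by_cases hp : p = i
  · subst hp
    simp [lA, lB, Ne.symm h]
  · simp [lA, lB, hp]

lemma lAB (i j : α) (h : i ≠ j) : (lA i j).comp (lB i j) = MonoidHom.id _ := by
  ext p
  by_cases hp : p = i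
  · subst hp
    simp [lA, lB, Ne.symm h]
  · simp [lA, lB, hp]

lemma rBA (i j : α) (h : i ≠ j) : (rB i j).comp (rA i j) = MonoidHom.id _ := by
  ext p
  by_cases hp : p = i
  · subst hp
    simp [rA, rB, Ne.symm h]
  · simp [rA, rB, hp]

lemma rAB (i j : α) (h : i ≠ j) : (rA i j).comp (rB i j) = MonoidHom.id _ := by
  ext p
  by_cases hp : p = i
  · subst hp
    simp [rA, rB, Ne.symm h]
  · simp [rA, rB, hp]

/-- The Nielsen automorphism `L_{ij} : x_i ↦ x_j x_i` (defined to be `1` when `i = j`). -/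
def nL (i j : α) : MulAut (FreeGroup α) :=
  if h : i = j then 1
  else MonoidHom.toMulEquiv (lA i j) (lB i j) (lBA i j h) (lAB i j h)

/-- The Nielsen automorphism `R_{ij} : x_i ↦ x_i x_j` (defined to be `1` when `i = j`). -/
def nR (i j : α) : MulAut (FreeGroup α) :=
  if h : i = j then 1
  else MonoidHom.toMulEquiv (rA i j) (rB i j) (rBA i j h) (rAB i j h)

/-- The generating set of the group `A_k`: Nielsen automorphisms `L_{ij}^±`, `R_{ij}^±`
of `F_{k+1} = ⟨x_0, x_1, …, x_k⟩` with `i ≠ j` and `j ≠ 0`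
(i.e. the C-generators, with `i = 0`, and the N-generators, with `i, j ≥ 1`). -/
def AgenSet (k : ℕ) : Set (MulAut (FreeGroup (Fin (k + 1)))) :=
  {φ | ∃ i j : Fin (k + 1), i ≠ j ∧ j ≠ 0 ∧
    (φ = nL i j ∨ φ = (nL i j)⁻¹ ∨ φ = nR i j ∨ φ = (nR i j)⁻¹)}

/-- The group `A_k ≤ Aut(F_{k+1})`. -/
def Ak (k : ℕ) : Subgroup (MulAut (FreeGroup (Fin (k + 1)))) :=
  Subgroup.closure (AgenSet k)

lemma nL_mem {k : ℕ} (i j : Fin (k + 1)) (hj : j ≠ 0) : nL i j ∈ Ak k := by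
  by_cases h : i = j
  · subst h
    rw [nL, dif_pos rfl]
    exact (Ak k).one_mem
  · exact Subgroup.subset_closure ⟨i, j, h, hj, Or.inl rfl⟩

lemma nR_mem {k : ℕ} (i j : Fin (k + 1)) (hj : j ≠ 0) : nR i j ∈ Ak k := by
  by_cases h : i = j
  · subst h
    rw [nR, dif_pos rfl]
    exact (Ak k).one_mem
  · exact Subgroup.subset_closure ⟨i, j, h, hj, Or.inr (Or.inr (Or.inl rfl))⟩

/-- `L_{ij}` as an element of the group `A_k`. -/
def Lg {k : ℕ} (i j : Fin (k + 1)) (hj : j ≠ 0) : Ak k := ⟨nL i j, nL_mem i j hj⟩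

/-- `R_{ij}` as an element of the group `A_k`. -/
def Rg {k : ℕ} (i j : Fin (k + 1)) (hj : j ≠ 0) : Ak k := ⟨nR i j, nR_mem i j hj⟩

end PRA
namespace PRA

open FreeGroup

variable {k : ℕ} {G : Type*} [Group G]

/-- The action of an automorphism `ψ` of `F_{k+1}` on `(k+1)`-tuples of elements of `G`
(identified with homomorphisms `F_{k+1} → G`): `(ψ.g) i = (lift g) (ψ⁻¹ x_i)`. -/
def tupAct (ψ : MulAut (FreeGroup (Fin (k + 1)))) (g : Fin (k + 1) → G) : Fin (k + 1) → G :=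
  fun i => FreeGroup.lift g (ψ⁻¹ (FreeGroup.of i))

/-- The initial tuple `(1 | S_0)`. -/
def initTup (k : ℕ) (S0 : Fin k → G) : Fin (k + 1) → G :=
  Fin.cases 1 S0

/-- The vertex set of `Σ'_k(G)`: the orbit of `(1|S_0)` under the action of `A_k`. -/
def SigmaSet (k : ℕ) (G : Type*) [Group G] (S0 : Fin k → G) : Set (Fin (k + 1) → G) :=
  {v | ∃ ψ ∈ Ak k, v = tupAct ψ (initTup k S0)}

/-- The list of `4k²` generators of `A_k`, indexed by a label `c : Fin 4`
(for `L, L⁻¹, R, R⁻¹`) and a pair of indices. -/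
def genAut (k : ℕ) (c : Fin 4) (i j : Fin (k + 1)) : MulAut (FreeGroup (Fin (k + 1))) :=
  ![nL i j, (nL i j)⁻¹, nR i j, (nR i j)⁻¹] c

/-- The distribution `μ_t` of the lazy random walk on `Σ'_k(G)` started at `(1|S_0)`;
in one step, with probability `1/2` stay put, with probability `1/2` move along one
of the `4k²` edges chosen uniformly. -/
def walkDist (k : ℕ) (G : Type*) [Group G] [Fintype G] [DecidableEq G] (S0 : Fin k → G) :
    ℕ → (Fin (k + 1) → G) → ℝ
  | 0, v => if v = initTup k S0 then 1 else 0
  | t + 1, v =>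
      (1 / 2) * walkDist k G S0 t v +
        (1 / (8 * (k : ℝ) ^ 2)) *
          ∑ c : Fin 4, ∑ i : Fin (k + 1), ∑ j : Fin (k + 1),
            if i ≠ j ∧ j ≠ 0 then walkDist k G S0 t (tupAct (genAut k c i j)⁻¹ v) else 0

open scoped Classical in
/-- The distribution `ν_t` of the accumulator:
`ν_t(g) = μ_t {(g_0|g_1,…,g_k) ∈ Σ'_k(G) : g_0 = g}`. -/
def accDist (k : ℕ) (G : Type*) [Group G] [Fintype G] [DecidableEq G] (S0 : Fin k → G)
    (t : ℕ) (g : G) : ℝ :=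
  ∑ v : Fin (k + 1) → G,
    if v ∈ SigmaSet k G S0 ∧ v 0 = g then walkDist k G S0 t v else 0

/-- The total variation distance between two (distributions given as) functions
on a finite set: `(1/2)·Σ_x |μ x − ν x|`. -/
def tvDist {X : Type*} [Fintype X] (μ ν : X → ℝ) : ℝ :=
  (∑ x : X, |μ x - ν x|) / 2

/-- The uniform distribution on a finite group `G`. -/
def unifG (G : Type*) [Group G] [Fintype G] : G → ℝ :=
  fun _ => (Fintype.card G : ℝ)⁻¹

open scoped Classical in
/-- The uniform distribution on `Σ'_k(G)`, as a function on all `(k+1)`-tuples. -/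
def unifSigma (k : ℕ) (G : Type*) [Group G] [Fintype G] (S0 : Fin k → G) :
    (Fin (k + 1) → G) → ℝ :=
  fun v => if v ∈ SigmaSet k G S0 then ((SigmaSet k G S0).ncard : ℝ)⁻¹ else 0

end PRA
namespace PRA

/-- The generating set of `SAut(F_k)`: the Nielsen automorphisms `L_{ij}^±`, `R_{ij}^±` of
`F_k = ⟨x_1,…,x_k⟩` for `i ≠ j`. -/
def SAutGenSet (k : ℕ) : Set (MulAut (FreeGroup (Fin k))) :=
  {φ | ∃ i j : Fin k, i ≠ j ∧
    (φ = nL i j ∨ φ = (nL i j)⁻¹ ∨ φ = nR i j ∨ φ = (nR i j)⁻¹)}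

/-- The group `SAut(F_k) ≤ Aut(F_k)` generated by the Nielsen automorphisms. -/
def SAutk (k : ℕ) : Subgroup (MulAut (FreeGroup (Fin k))) :=
  Subgroup.closure (SAutGenSet k)

variable {k : ℕ} {G : Type*} [Group G]

/-- The action of an automorphism `ψ` of `F_k` on `k`-tuples of elements of `G`
(identified with homomorphisms `F_k → G`): `(ψ.S) i = (lift S) (ψ⁻¹ x_i)`. -/
def tupActN (ψ : MulAut (FreeGroup (Fin k))) (S : Fin k → G) : Fin k → G :=
  fun i => FreeGroup.lift S (ψ⁻¹ (FreeGroup.of i))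

/-- The vertex set of `Γ'_k(G)`: the orbit of `S_0` under the action of `SAut(F_k)`. -/
def GammaSet (k : ℕ) (G : Type*) [Group G] (S0 : Fin k → G) : Set (Fin k → G) :=
  {S | ∃ ψ ∈ SAutk k, S = tupActN ψ S0}

end PRA
/-!
Write a tuple of `G^{k+1}` as `(g₀ | S)` with `S ∈ G^k`. An N-generator `L_{ij}^±, R_{ij}^±` of
`A_k` fixes `g₀` and acts on `S` as the corresponding Nielsen generator of `SAut(F_k)`; a
C-generator fixes `S` and multiplies `g₀` on the left or right by an entry of `S`. Hence the
`A_k`-orbit of `(1 | S₀)` lies in `G × Γ'_k(G)`. Conversely every element of `SAut(F_k)` lifts to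
`A_k`, and since `S` generates `G`, left multiplications of `g₀` by entries of `S` reach every
`g ∈ G`. So `Σ'_k(G) = G × Γ'_k(G)`: every fiber of `π_C` is a copy of `Γ'_k(G)`, and
`|Σ'_k(G)| = |G| · |Γ'_k(G)|`.
-/

namespace PRA

open FreeGroup Function MulAction
open scoped Pointwise

section Nielsen

variable {α : Type*} [DecidableEq α]

lemma inv_nL_of {i j : α} (h : i ≠ j) (p : α) :
    (nL i j)⁻¹ (of p) = if p = i then (of j)⁻¹ * of p else of p := by
  rw [nL, dif_neg h, MulAut.inv_def, MonoidHom.toMulEquiv_symm_apply]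
  simp [lB]

lemma inv_nR_of {i j : α} (h : i ≠ j) (p : α) :
    (nR i j)⁻¹ (of p) = if p = i then of p * (of j)⁻¹ else of p := by
  rw [nR, dif_neg h, MulAut.inv_def, MonoidHom.toMulEquiv_symm_apply]
  simp [rB]

def nielsen (c : Fin 4) (i j : α) : MulAut (FreeGroup α) :=
  ![nL i j, (nL i j)⁻¹, nR i j, (nR i j)⁻¹] c

end Nielsen

def nielsenWord {G : Type*} [Group G] (c : Fin 4) (a b : G) : G :=
  ![b⁻¹ * a, b * a, a * b⁻¹, a * b] c

/-- The action underlying `tupAct` and `tupActN` (both agree with it definitionally). It is not a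
global instance: for `G = FreeGroup α` it would disagree with `Pi.mulAction`. -/
abbrev tupleAction {α G : Type*} [Group G] : MulAction (MulAut (FreeGroup α)) (α → G) where
  smul ψ S i := lift S (ψ⁻¹ (of i))
  one_smul S := by funext i; exact lift_apply_of
  mul_smul ψ φ S := by
    funext i
    change lift S ((ψ * φ)⁻¹ (of i)) = lift (fun p => lift S (φ⁻¹ (of p))) (ψ⁻¹ (of i))
    rw [mul_inv_rev]
    exact lift_unique ((lift S).comp (φ⁻¹).toMonoidHom) fun _ => rfl

attribute [local instance] tupleAction

section Action

variable {α G : Type*} [Group G]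

lemma smul_apply (ψ : MulAut (FreeGroup α)) (S : α → G) (i : α) :
    (ψ • S) i = lift S (ψ⁻¹ (of i)) := rfl

variable [DecidableEq α]

lemma nL_smul {i j : α} (h : i ≠ j) (S : α → G) :
    nL i j • S = update S i ((S j)⁻¹ * S i) := by
  funext p
  by_cases hp : p = i <;> simp [smul_apply, inv_nL_of h, hp]

lemma nR_smul {i j : α} (h : i ≠ j) (S : α → G) :
    nR i j • S = update S i (S i * (S j)⁻¹) := by
  funext p
  by_cases hp : p = i <;> simp [smul_apply, inv_nR_of h, hp]

lemma inv_nL_smul {i j : α} (h : i ≠ j) (S : α → G) :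
    (nL i j)⁻¹ • S = update S i (S j * S i) := by
  rw [inv_smul_eq_iff, nL_smul h]
  simp [h.symm]

lemma inv_nR_smul {i j : α} (h : i ≠ j) (S : α → G) :
    (nR i j)⁻¹ • S = update S i (S i * S j) := by
  rw [inv_smul_eq_iff, nR_smul h]
  simp [h.symm]

lemma nielsen_smul (c : Fin 4) {i j : α} (h : i ≠ j) (S : α → G) :
    nielsen c i j • S = update S i (nielsenWord c (S i) (S j)) := by
  fin_cases c
  exacts [nL_smul h S, inv_nL_smul h S, nR_smul h S, inv_nR_smul h S]

end Action

section Membership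

variable {k : ℕ}

lemma nielsen_mem_Ak (c : Fin 4) (i : Fin (k + 1)) {j : Fin (k + 1)} (hj : j ≠ 0) :
    nielsen c i j ∈ Ak k := by
  fin_cases c
  exacts [nL_mem i j hj, inv_mem (nL_mem i j hj), nR_mem i j hj, inv_mem (nR_mem i j hj)]

lemma exists_nielsen_of_mem_AgenSet {φ : MulAut (FreeGroup (Fin (k + 1)))} (hφ : φ ∈ AgenSet k) :
    ∃ c i j, i ≠ j ∧ j ≠ 0 ∧ φ = nielsen c i j := by
  obtain ⟨i, j, hij, hj, h | h | h | h⟩ := hφ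
  exacts [⟨0, i, j, hij, hj, h⟩, ⟨1, i, j, hij, hj, h⟩, ⟨2, i, j, hij, hj, h⟩,
    ⟨3, i, j, hij, hj, h⟩]

lemma exists_nielsen_of_mem_SAutGenSet {φ : MulAut (FreeGroup (Fin k))}
    (hφ : φ ∈ SAutGenSet k) : ∃ c i j, i ≠ j ∧ φ = nielsen c i j := by
  obtain ⟨i, j, hij, h | h | h | h⟩ := hφ
  exacts [⟨0, i, j, hij, h⟩, ⟨1, i, j, hij, h⟩, ⟨2, i, j, hij, h⟩, ⟨3, i, j, hij, h⟩]

lemma nielsen_mem_SAutk (c : Fin 4) {i j : Fin k} (h : i ≠ j) : nielsen c i j ∈ SAutk k :=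
  Subgroup.subset_closure ⟨i, j, h, by fin_cases c <;> simp [nielsen]⟩

end Membership

section Orbits

variable {k : ℕ} {G : Type*} [Group G]

lemma sigmaSet_eq_orbit (S0 : Fin k → G) :
    SigmaSet k G S0 = orbit (Ak k) (Fin.cons 1 S0 : Fin (k + 1) → G) := by
  ext v
  constructor
  · rintro ⟨ψ, hψ, rfl⟩
    exact ⟨⟨ψ, hψ⟩, rfl⟩
  · rintro ⟨⟨ψ, hψ⟩, rfl⟩
    exact ⟨ψ, hψ, rfl⟩

lemma gammaSet_eq_orbit (S0 : Fin k → G) : GammaSet k G S0 = orbit (SAutk k) S0 := by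
  ext S
  constructor
  · rintro ⟨ψ, hψ, rfl⟩
    exact ⟨⟨ψ, hψ⟩, rfl⟩
  · rintro ⟨⟨ψ, hψ⟩, rfl⟩
    exact ⟨ψ, hψ, rfl⟩

lemma nielsen_succ_smul_cons (c : Fin 4) {i j : Fin k} (h : i ≠ j) (g : G) (S : Fin k → G) :
    nielsen c i.succ j.succ • (Fin.cons g S : Fin (k + 1) → G) =
      Fin.cons g (nielsen c i j • S) := by
  rw [nielsen_smul c ((Fin.succ_injective k).ne h), nielsen_smul c h, Fin.cons_update]
  simp

lemma nielsen_zero_smul_cons (c : Fin 4) (j : Fin k) (g : G) (S : Fin k → G) :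
    nielsen c 0 j.succ • (Fin.cons g S : Fin (k + 1) → G) =
      Fin.cons (nielsenWord c g (S j)) S := by
  rw [nielsen_smul c (Fin.succ_ne_zero j).symm, Fin.update_cons_zero]
  simp

lemma smul_mem_orbit_iff {M X : Type*} [Group M] [MulAction M X] (m : M) {x y : X} :
    m • x ∈ orbit M y ↔ x ∈ orbit M y := by
  rw [← orbit_eq_iff, ← orbit_eq_iff, orbit_smul]

lemma orbit_Ak_cons_subset (g : G) (S : Fin k → G) :
    orbit (Ak k) (Fin.cons g S : Fin (k + 1) → G) ⊆ {v | Fin.tail v ∈ orbit (SAutk k) S} := by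
  have hstab : Ak k ≤ stabilizer _ {v : Fin (k + 1) → G | Fin.tail v ∈ orbit (SAutk k) S} := by
    refine (Subgroup.closure_le _).2 fun φ hφ => mem_stabilizer_set.2 fun v => ?_
    obtain ⟨c, i, j, hij, hj, rfl⟩ := exists_nielsen_of_mem_AgenSet hφ
    obtain ⟨j, rfl⟩ := Fin.exists_succ_eq.2 hj
    rw [← Fin.cons_self_tail v]
    cases i using Fin.cases with
    | zero => simp only [nielsen_zero_smul_cons, Set.mem_ofPred_eq, Fin.tail_cons]
    | succ i =>
      replace hij := (Fin.succ_injective k).ne_iff.1 hij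
      simp only [nielsen_succ_smul_cons c hij, Set.mem_ofPred_eq, Fin.tail_cons]
      exact smul_mem_orbit_iff (⟨_, nielsen_mem_SAutk c hij⟩ : SAutk k)
  rintro _ ⟨⟨ψ, hψ⟩, rfl⟩
  exact (mem_stabilizer_set.1 (hstab hψ) _).2 (by simp [mem_orbit_self])

lemma exists_mem_Ak_smul_cons {φ : MulAut (FreeGroup (Fin k))} (hφ : φ ∈ SAutk k) :
    ∃ ψ ∈ Ak k, ∀ (g : G) (S : Fin k → G),
      ψ • (Fin.cons g S : Fin (k + 1) → G) = Fin.cons g (φ • S) := by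
  induction hφ using Subgroup.closure_induction with
  | mem φ hφ =>
    obtain ⟨c, i, j, hij, rfl⟩ := exists_nielsen_of_mem_SAutGenSet hφ
    exact ⟨_, nielsen_mem_Ak c i.succ j.succ_ne_zero, nielsen_succ_smul_cons c hij⟩
  | one => exact ⟨1, one_mem _, fun _ _ => by rw [one_smul, one_smul]⟩
  | mul φ φ' _ _ ih ih' =>
    obtain ⟨ψ, hψ, e⟩ := ih
    obtain ⟨ψ', hψ', e'⟩ := ih'
    exact ⟨ψ * ψ', mul_mem hψ hψ', fun g S => by rw [mul_smul, mul_smul, e', e]⟩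
  | inv φ _ ih =>
    obtain ⟨ψ, hψ, e⟩ := ih
    exact ⟨ψ⁻¹, inv_mem hψ, fun g S => by rw [inv_smul_eq_iff, e, smul_inv_smul]⟩

lemma cons_mem_orbit_cons_one {S : Fin k → G} (hS : Subgroup.closure (Set.range S) = ⊤)
    (g : G) :
    (Fin.cons g S : Fin (k + 1) → G) ∈ orbit (Ak k) (Fin.cons 1 S : Fin (k + 1) → G) := by
  have hg : g ∈ Subgroup.closure (Set.range S) := hS ▸ Subgroup.mem_top g
  induction hg using Subgroup.closure_induction_left with
  | one => exact mem_orbit_self _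
  | mul_left _ hx y _ ih =>
    obtain ⟨j, rfl⟩ := hx
    have := mem_orbit_of_mem_orbit (⟨_, nielsen_mem_Ak 1 0 j.succ_ne_zero⟩ : Ak k) ih
    rwa [Subgroup.mk_smul, nielsen_zero_smul_cons] at this
  | inv_mul_cancel _ hx y _ ih =>
    obtain ⟨j, rfl⟩ := hx
    have := mem_orbit_of_mem_orbit (⟨_, nielsen_mem_Ak 0 0 j.succ_ne_zero⟩ : Ak k) ih
    rwa [Subgroup.mk_smul, nielsen_zero_smul_cons] at this

theorem sigmaSet_eq {S0 : Fin k → G} (hS0 : Subgroup.closure (Set.range S0) = ⊤) :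
    SigmaSet k G S0 = {v : Fin (k + 1) → G | Fin.tail v ∈ GammaSet k G S0} := by
  rw [sigmaSet_eq_orbit S0, gammaSet_eq_orbit S0]
  refine (orbit_Ak_cons_subset 1 S0).antisymm fun v hv => ?_
  obtain ⟨⟨φ, hφ⟩, hv : φ • S0 = Fin.tail v⟩ := hv
  obtain ⟨ψ, hψ, e⟩ := exists_mem_Ak_smul_cons (G := G) hφ
  rw [← Fin.cons_self_tail v, ← hv, ← e,
    ← orbit_eq_iff.2 (cons_mem_orbit_cons_one hS0 (v 0))]
  exact mem_orbit _ (⟨ψ, hψ⟩ : Ak k)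

end Orbits

section Counting

variable {k : ℕ} {G : Type*} [Group G] {S0 : Fin k → G}

lemma fiber_eq_image_cons (hS0 : Subgroup.closure (Set.range S0) = ⊤) (g : G) :
    {v ∈ SigmaSet k G S0 | v 0 = g} = Fin.cons g '' GammaSet k G S0 := by
  rw [sigmaSet_eq hS0]
  ext v
  constructor
  · rintro ⟨hv, rfl⟩
    exact ⟨_, hv, Fin.cons_self_tail v⟩
  · rintro ⟨S, hS, rfl⟩
    simpa using hS

lemma ncard_fiber (hS0 : Subgroup.closure (Set.range S0) = ⊤) (g : G) :
    {v ∈ SigmaSet k G S0 | v 0 = g}.ncard = (GammaSet k G S0).ncard := by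
  rw [fiber_eq_image_cons hS0,
    Set.ncard_image_of_injective _ (Fin.cons_right_injective (α := fun _ => G) g)]

lemma ncard_sigmaSet (hS0 : Subgroup.closure (Set.range S0) = ⊤) :
    (SigmaSet k G S0).ncard = Nat.card G * (GammaSet k G S0).ncard := by
  have : SigmaSet k G S0 = Fin.consEquiv (fun _ => G) '' (Set.univ ×ˢ GammaSet k G S0) := by
    rw [sigmaSet_eq hS0, Equiv.image_eq_preimage_symm]
    ext v
    simp
  rw [this, Set.ncard_image_of_injective _ (Equiv.injective _), Set.ncard_prod, Set.ncard_univ]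

lemma gammaSet_ncard_ne_zero [Finite G] (S0 : Fin k → G) : (GammaSet k G S0).ncard ≠ 0 :=
  (Set.ncard_pos (Set.toFinite _)).2 ⟨S0, gammaSet_eq_orbit S0 ▸ mem_orbit_self S0⟩ |>.ne'

end Counting

end PRA

open PRA in
open scoped Classical in
/-- For every `g ∈ G`, the fiber `{v ∈ Σ'_k(G) : v_0 = g}` has cardinality
`|Γ'_k(G)|` (in particular the cardinality is independent of `g`), and the push-forward of the
uniform distribution on `Σ'_k(G)` under `π_C(g_0|g_1,…,g_k) = g_0` is the uniform
distribution on `G`. -/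
theorem statement10 (k : ℕ) (G : Type*) [Group G] [Fintype G]
    (S0 : Fin k → G) (hS0 : Subgroup.closure (Set.range S0) = ⊤) :
    (∀ g : G, {v ∈ SigmaSet k G S0 | v 0 = g}.ncard = (GammaSet k G S0).ncard) ∧
      ∀ g : G,
        (∑ v : Fin (k + 1) → G,
          if v ∈ SigmaSet k G S0 ∧ v 0 = g then ((SigmaSet k G S0).ncard : ℝ)⁻¹ else 0)
          = (Fintype.card G : ℝ)⁻¹ := by
  refine ⟨ncard_fiber hS0, fun g => ?_⟩
  have hfilter :
      (Finset.univ.filter fun v : Fin (k + 1) → G => v ∈ SigmaSet k G S0 ∧ v 0 = g).card =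
        {v ∈ SigmaSet k G S0 | v 0 = g}.ncard := by
    rw [← Set.ncard_coe_finset]
    simp
  have hΓ : ((GammaSet k G S0).ncard : ℝ) ≠ 0 := by exact_mod_cast gammaSet_ncard_ne_zero S0
  rw [← Finset.sum_filter, Finset.sum_const, nsmul_eq_mul, hfilter, ncard_fiber hS0,
    ncard_sigmaSet hS0, Nat.card_eq_fintype_card]
  push_cast
  field_simp
end
end

section
/- For every k ≥ 1, the group A_k is isomorphic to the semidirect product (F_k × F_k) ⋊ SAut(F_k), where SAut(F_k) acts on F_k × F_k coordinatewise via the canonical action of automorphisms on the free group: φ.(l, r) = (φ(l), φ(r)). -/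
noncomputable section

namespace PRA

/-- The coordinatewise (diagonal) action of `SAut(F_k)` on `F_k × F_k`,
`φ.(l, r) = (φ(l), φ(r))`, as a homomorphism into the automorphism group. -/
def diagAct (k : ℕ) : SAutk k →* MulAut (FreeGroup (Fin k) × FreeGroup (Fin k)) where
  toFun φ := MulEquiv.prodCongr (φ : MulAut (FreeGroup (Fin k))) (φ : MulAut (FreeGroup (Fin k)))
  map_one' := by ext x <;> rfl
  map_mul' a b := by ext x <;> rfl

end PRA

/-!
A triple `(l, r, φ)` acts on `F_{k+1}` by `x_0 ↦ l⁻¹ x_0 r` and `x_{i+1} ↦ φ(x_i)`, and this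
defines a homomorphism from the semidirect product to `Aut(F_{k+1})`. It sends `(x_m, 1)` to
`L_{0,m+1}⁻¹`, `(1, x_m)` to `R_{0,m+1}`, and the Nielsen generators `L_{ab}`, `R_{ab}` of
`SAut(F_k)` to the N-generators `L_{a+1,b+1}`, `R_{a+1,b+1}`, so its image is `A_k`.
It is injective: if `(l, r, φ)` acts trivially then `φ = 1`, killing `x_0` gives `l = r`, and
`l` commutes with `x_0`. Letting `x_0` act on `F_k` by inversion and `x_{i+1}` by left
multiplication by `x_i` then gives `l² = 1`, so `l = 1` because free groups are torsion-free.
-/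

namespace FreeGroup

lemma mulAut_ext {α : Type*} {f g : MulAut (FreeGroup α)}
    (h : ∀ a, f (of a) = g (of a)) : f = g :=
  MulEquiv.toMonoidHom_injective (ext_hom _ _ h)

lemma apply_mem_of_forall_of {α G : Type*} [Group G] {H : Subgroup G}
    (f : FreeGroup α →* G) (h : ∀ a, f (of a) ∈ H) (w : FreeGroup α) : f w ∈ H := by
  have : ⊤ ≤ H.comap f := by
    rw [← closure_range_of, Subgroup.closure_le]
    rintro _ ⟨a, rfl⟩
    exact h a
  exact this (Subgroup.mem_top w)

end FreeGroup

namespace PRA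

open FreeGroup (of)

section Nielsen

variable {α : Type*} [DecidableEq α] {i j : α}

lemma nL_apply_of (h : i ≠ j) (p : α) :
    nL i j (of p) = if p = i then of j * of p else of p := by
  simp [nL, h, lA]

lemma nR_apply_of (h : i ≠ j) (p : α) :
    nR i j (of p) = if p = i then of p * of j else of p := by
  simp [nR, h, rA]

end Nielsen

variable (k : ℕ)

def incl : FreeGroup (Fin k) →* FreeGroup (Fin (k + 1)) := FreeGroup.map Fin.succ

@[simp] lemma incl_of (i : Fin k) : incl k (of i) = of i.succ := FreeGroup.map.of

def retract : FreeGroup (Fin (k + 1)) →* FreeGroup (Fin k) :=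
  FreeGroup.lift (Fin.cases 1 of)

@[simp] lemma retract_of_zero : retract k (of 0) = 1 := by simp [retract]

@[simp] lemma retract_incl (w : FreeGroup (Fin k)) : retract k (incl k w) = w := by
  have : (retract k).comp (incl k) = MonoidHom.id _ :=
    FreeGroup.ext_hom _ _ fun a => by simp [retract]
  exact DFunLike.congr_fun this w

lemma incl_injective : Function.Injective (incl k) :=
  Function.LeftInverse.injective (retract_incl k)

def invAction : FreeGroup (Fin (k + 1)) →* Equiv.Perm (FreeGroup (Fin k)) :=
  FreeGroup.lift (Fin.cases (Equiv.inv _) fun i => MulAction.toPerm (of i))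

@[simp] lemma invAction_of_zero : invAction k (of 0) = Equiv.inv _ := by simp [invAction]

@[simp] lemma invAction_incl (w : FreeGroup (Fin k)) :
    invAction k (incl k w) = MulAction.toPerm w := by
  have : (invAction k).comp (incl k) = MulAction.toPermHom _ _ :=
    FreeGroup.ext_hom _ _ fun a => by simp [invAction]
  exact DFunLike.congr_fun this w

def endo (l r : FreeGroup (Fin k)) (φ : MulAut (FreeGroup (Fin k))) :
    FreeGroup (Fin (k + 1)) →* FreeGroup (Fin (k + 1)) :=
  FreeGroup.lift (Fin.cases ((incl k l)⁻¹ * of 0 * incl k r) fun i => incl k (φ (of i)))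

section endo

variable {k} (l r : FreeGroup (Fin k)) (φ : MulAut (FreeGroup (Fin k)))

@[simp] lemma endo_of_zero : endo k l r φ (of 0) = (incl k l)⁻¹ * of 0 * incl k r := by
  simp [endo]

@[simp] lemma endo_of_succ (i : Fin k) : endo k l r φ (of i.succ) = incl k (φ (of i)) := by
  simp [endo]

@[simp] lemma endo_incl (w : FreeGroup (Fin k)) : endo k l r φ (incl k w) = incl k (φ w) := by
  have : (endo k l r φ).comp (incl k) = (incl k).comp φ.toMonoidHom :=
    FreeGroup.ext_hom _ _ fun a => by simp
  exact DFunLike.congr_fun this w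

lemma endo_comp (l' r' : FreeGroup (Fin k)) (φ' : MulAut (FreeGroup (Fin k))) :
    (endo k l r φ).comp (endo k l' r' φ') = endo k (l * φ l') (r * φ r') (φ * φ') := by
  refine FreeGroup.ext_hom _ _ fun p => ?_
  cases p using Fin.cases <;> simp [mul_assoc]

@[simp] lemma endo_one : endo k 1 1 1 = MonoidHom.id _ := by
  refine FreeGroup.ext_hom _ _ fun p => ?_
  cases p using Fin.cases <;> simp

end endo

abbrev PairSemidirect := (FreeGroup (Fin k) × FreeGroup (Fin k)) ⋊[diagAct k] SAutk k

def endoOf (g : PairSemidirect k) : FreeGroup (Fin (k + 1)) →* FreeGroup (Fin (k + 1)) :=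
  endo k g.left.1 g.left.2 g.right

lemma endoOf_mul (g h : PairSemidirect k) : endoOf k (g * h) = (endoOf k g).comp (endoOf k h) :=
  (endo_comp _ _ _ _ _ _).symm

@[simp] lemma endoOf_one : endoOf k 1 = MonoidHom.id _ := endo_one

def toAut : PairSemidirect k →* MulAut (FreeGroup (Fin (k + 1))) where
  toFun g := (endoOf k g).toMulEquiv (endoOf k g⁻¹)
    (by rw [← endoOf_mul, inv_mul_cancel, endoOf_one])
    (by rw [← endoOf_mul, mul_inv_cancel, endoOf_one])
  map_one' := MulEquiv.ext fun x => by simp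
  map_mul' g h := MulEquiv.ext fun x => by simp [endoOf_mul]

section toAut

variable {k}

@[simp] lemma toAut_apply (g : PairSemidirect k) (x : FreeGroup (Fin (k + 1))) :
    toAut k g x = endo k g.left.1 g.left.2 g.right x := rfl

lemma toAut_injective : Function.Injective (toAut k) := by
  refine (injective_iff_map_eq_one _).mpr fun g hg => ?_
  obtain ⟨⟨l, r⟩, φ⟩ := g
  have fix : ∀ x, endo k l r φ x = x := fun x => DFunLike.congr_fun hg x
  have hφ : φ = 1 := Subtype.ext <| FreeGroup.mulAut_ext fun i =>
    incl_injective k (by simpa using fix (of i.succ))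
  have h0 : (incl k l)⁻¹ * of 0 * incl k r = of 0 := by simpa using fix (of 0)
  have hlr : l = r := by simpa [inv_mul_eq_one] using congr_arg (retract k) h0
  subst hlr
  have hsq : l⁻¹ ^ 2 = 1 := by
    simpa [sq, mul_assoc] using DFunLike.congr_fun (congr_arg (invAction k) h0) 1
  have hl : l = 1 := inv_eq_one.mp ((pow_eq_one_iff_left two_ne_zero).mp hsq)
  subst hl hφ
  rfl

lemma toAut_inl_left (m : Fin k) :
    toAut k (SemidirectProduct.inl (of m, 1)) = (nL 0 m.succ)⁻¹ := by
  refine eq_inv_of_mul_eq_one_left (FreeGroup.mulAut_ext fun p => ?_)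
  cases p using Fin.cases <;>
    simp [nL_apply_of (Fin.succ_ne_zero m).symm, Fin.succ_ne_zero, ← mul_assoc]

lemma toAut_inl_right (m : Fin k) :
    toAut k (SemidirectProduct.inl (1, of m)) = nR 0 m.succ := by
  refine FreeGroup.mulAut_ext fun p => ?_
  cases p using Fin.cases <;> simp [nR_apply_of (Fin.succ_ne_zero m).symm, Fin.succ_ne_zero]

variable {a b : Fin k} {s : SAutk k}

lemma toAut_inr_of_eq_nL (hab : a ≠ b) (hs : (s : MulAut (FreeGroup (Fin k))) = nL a b) :
    toAut k (SemidirectProduct.inr s) = nL a.succ b.succ := by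
  refine FreeGroup.mulAut_ext fun p => ?_
  cases p using Fin.cases <;> simp [hs, nL_apply_of hab, nL_apply_of (Fin.succ_inj.not.mpr hab),
    (Fin.succ_ne_zero a).symm, apply_ite (incl k)]

lemma toAut_inr_of_eq_nR (hab : a ≠ b) (hs : (s : MulAut (FreeGroup (Fin k))) = nR a b) :
    toAut k (SemidirectProduct.inr s) = nR a.succ b.succ := by
  refine FreeGroup.mulAut_ext fun p => ?_
  cases p using Fin.cases <;> simp [hs, nR_apply_of hab, nR_apply_of (Fin.succ_inj.not.mpr hab),
    (Fin.succ_ne_zero a).symm, apply_ite (incl k)]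

lemma toAut_inr_mem (s : SAutk k) : toAut k (SemidirectProduct.inr s) ∈ Ak k := by
  suffices ⊤ ≤ (Ak k).comap ((toAut k).comp SemidirectProduct.inr) from
    this (Subgroup.mem_top s)
  refine (Subgroup.closure_closure_coe_preimage (k := SAutGenSet k)).symm.le.trans
    ((Subgroup.closure_le _).mpr ?_)
  rintro (t : SAutk k) ⟨a, b, hab, ht | ht | ht | ht⟩ <;>
    change toAut k (SemidirectProduct.inr t) ∈ Ak k
  · exact toAut_inr_of_eq_nL hab ht ▸ nL_mem _ _ (Fin.succ_ne_zero b)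
  · rw [← inv_inv t, map_inv, map_inv, toAut_inr_of_eq_nL hab (by simp [ht])]
    exact inv_mem (nL_mem _ _ (Fin.succ_ne_zero b))
  · exact toAut_inr_of_eq_nR hab ht ▸ nR_mem _ _ (Fin.succ_ne_zero b)
  · rw [← inv_inv t, map_inv, map_inv, toAut_inr_of_eq_nR hab (by simp [ht])]
    exact inv_mem (nR_mem _ _ (Fin.succ_ne_zero b))

lemma toAut_inl_mem (n : FreeGroup (Fin k) × FreeGroup (Fin k)) :
    toAut k (SemidirectProduct.inl n) ∈ Ak k := by
  have hn : n = (n.1, 1) * (1, n.2) := by simp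
  rw [hn, map_mul, map_mul]
  refine mul_mem (FreeGroup.apply_mem_of_forall_of
      ((toAut k).comp (SemidirectProduct.inl.comp (MonoidHom.inl _ _))) (fun m => ?_) n.1)
    (FreeGroup.apply_mem_of_forall_of
      ((toAut k).comp (SemidirectProduct.inl.comp (MonoidHom.inr _ _))) (fun m => ?_) n.2)
  · simpa [toAut_inl_left] using inv_mem (nL_mem 0 m.succ (Fin.succ_ne_zero m))
  · simpa [toAut_inl_right] using nR_mem 0 m.succ (Fin.succ_ne_zero m)

variable {i j : Fin (k + 1)}

lemma nL_mem_range_toAut (hij : i ≠ j) (hj : j ≠ 0) : nL i j ∈ (toAut k).range := by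
  obtain ⟨b, rfl⟩ := Fin.exists_succ_eq.mpr hj
  cases i using Fin.cases with
  | zero =>
    exact ⟨(SemidirectProduct.inl (of b, 1))⁻¹, by rw [map_inv, toAut_inl_left, inv_inv]⟩
  | succ a =>
    have hab : a ≠ b := fun h => hij (h ▸ rfl)
    have hs : nL a b ∈ SAutk k := Subgroup.subset_closure ⟨a, b, hab, Or.inl rfl⟩
    exact ⟨_, toAut_inr_of_eq_nL (s := ⟨_, hs⟩) hab rfl⟩

lemma nR_mem_range_toAut (hij : i ≠ j) (hj : j ≠ 0) : nR i j ∈ (toAut k).range := by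
  obtain ⟨b, rfl⟩ := Fin.exists_succ_eq.mpr hj
  cases i using Fin.cases with
  | zero => exact ⟨_, toAut_inl_right b⟩
  | succ a =>
    have hab : a ≠ b := fun h => hij (h ▸ rfl)
    have hs : nR a b ∈ SAutk k :=
      Subgroup.subset_closure ⟨a, b, hab, Or.inr (Or.inr (Or.inl rfl))⟩
    exact ⟨_, toAut_inr_of_eq_nR (s := ⟨_, hs⟩) hab rfl⟩

lemma range_toAut : (toAut k).range = Ak k := by
  refine le_antisymm ?_ ((Subgroup.closure_le _).mpr ?_)
  · rintro _ ⟨g, rfl⟩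
    rw [← SemidirectProduct.inl_left_mul_inr_right g, map_mul]
    exact mul_mem (toAut_inl_mem _) (toAut_inr_mem _)
  · rintro _ ⟨i, j, hij, hj, rfl | rfl | rfl | rfl⟩
    exacts [nL_mem_range_toAut hij hj, inv_mem (nL_mem_range_toAut hij hj),
      nR_mem_range_toAut hij hj, inv_mem (nR_mem_range_toAut hij hj)]

end toAut

end PRA

open PRA in
theorem statement11_general (k : ℕ) :
    Nonempty (((FreeGroup (Fin k) × FreeGroup (Fin k)) ⋊[diagAct k] SAutk k) ≃* Ak k) :=
  ⟨(MonoidHom.ofInjective toAut_injective).trans (MulEquiv.subgroupCongr range_toAut)⟩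

open PRA in
/-- The group `A_k` is isomorphic to the semidirect product
`(F_k × F_k) ⋊ SAut(F_k)`, where `SAut(F_k)` acts coordinatewise on `F_k × F_k` via the
canonical action of automorphisms on the free group. -/
theorem statement11 (k : ℕ) (hk : 1 ≤ k) :
    Nonempty (((FreeGroup (Fin k) × FreeGroup (Fin k)) ⋊[diagAct k] SAutk k) ≃* Ak k) :=
  statement11_general k
end
end

section
/- Let k ≥ 2 and let λ ∈ ℝ be such that Δ_k² − λ·Δ_k is a sum of squares in ℝ[A_k]. Then λ ≤ 8k. -/
noncomputable section

namespace PRA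

/-- The `*`-operation on the real group ring `ℝ[G]`: the linear extension of `g ↦ g⁻¹`. -/
def gstar {G : Type*} [Group G] (ξ : MonoidAlgebra ℝ G) : MonoidAlgebra ℝ G :=
  MonoidAlgebra.ofCoeff (Finsupp.mapDomain (fun g : G => g⁻¹) ξ.coeff)

/-- An element of `ℝ[G]` is a sum of squares if it equals `Σ_i ξ_i* ξ_i`
for finitely many `ξ_i ∈ ℝ[G]`. -/
def IsSOS {G : Type*} [Group G] (ξ : MonoidAlgebra ℝ G) : Prop :=
  ∃ (n : ℕ) (f : Fin n → MonoidAlgebra ℝ G), ξ = ∑ m : Fin n, gstar (f m) * f m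

variable {K : ℕ}

/-- The partial Laplacian
`Δ_{ij} = (1−L_{ij})(1−L_{ij})* + (1−R_{ij})(1−R_{ij})* ∈ ℝ[A_K]`
(for `i = j` both Nielsen automorphisms are `1` and `Δ_{ii} = 0`). -/
def Del (K : ℕ) (i j : Fin (K + 1)) (hj : j ≠ 0) : MonoidAlgebra ℝ (Ak K) :=
  (1 - MonoidAlgebra.of ℝ (Ak K) (Lg i j hj)) *
      gstar (1 - MonoidAlgebra.of ℝ (Ak K) (Lg i j hj)) +
    (1 - MonoidAlgebra.of ℝ (Ak K) (Rg i j hj)) *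
      gstar (1 - MonoidAlgebra.of ℝ (Ak K) (Rg i j hj))

/-- The embedding of the index range `{1,…,m}` into `{0,1,…,K}` for `m ≤ K`. -/
def idx {K m : ℕ} (h : m ≤ K) (s : Fin m) : Fin (K + 1) :=
  (Fin.castLE h s).succ

lemma idx_ne_zero {K m : ℕ} (h : m ≤ K) (s : Fin m) : idx h s ≠ 0 :=
  Fin.succ_ne_zero _

/-- `Δ_m^C = Σ_{s=1}^m Δ_{0s}`, as an element of `ℝ[A_K]`. -/
def DelC (K m : ℕ) (h : m ≤ K) : MonoidAlgebra ℝ (Ak K) :=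
  ∑ s : Fin m, Del K 0 (idx h s) (idx_ne_zero h s)

/-- `Δ_m^N = Σ_{1 ≤ i,j ≤ m} Δ_{ij}`, as an element of `ℝ[A_K]`. -/
def DelN (K m : ℕ) (h : m ≤ K) : MonoidAlgebra ℝ (Ak K) :=
  ∑ i : Fin m, ∑ j : Fin m, Del K (idx h i) (idx h j) (idx_ne_zero h j)

/-- The full non-normalized group Laplacian `Δ_K = Δ_K^C + Δ_K^N ∈ ℝ[A_K]`. -/
def DelFull (K : ℕ) : MonoidAlgebra ℝ (Ak K) :=
  DelC K K le_rfl + DelN K K le_rfl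

end PRA

/-!
Let `A_k` act on `F_{k+1}` and let `φ(ξ) = ⟨ξ δ_{x₀}, δ_{x₀}⟩` be the vector state of the
permutation representation on `ℓ²(F_{k+1})` at `x₀ = x_0`; it is nonnegative on sums of squares.
The N-generators fix `x₀` while every C-generator moves it, so
`Δ_k δ_{x₀} = 4k δ_{x₀} - (4k point masses away from x₀)`. Hence `φ(Δ_k) = 4k`, and pairing
`Δ_k` once more against this vector gives `φ(Δ_k²) ≤ 4k (4k + 4k)`. Positivity of
`φ(Δ_k² - λ Δ_k)` then reads `4k λ ≤ 32 k²`.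
-/

namespace PRA

open MonoidAlgebra

section GroupRing

variable {G : Type*} [Group G]

lemma gstar_single (g : G) (c : ℝ) : gstar (single g c) = single g⁻¹ c :=
  congrArg ofCoeff Finsupp.mapDomain_single

lemma gstar_add (a b : MonoidAlgebra ℝ G) : gstar (a + b) = gstar a + gstar b :=
  congrArg ofCoeff Finsupp.mapDomain_add

lemma gstar_sub (a b : MonoidAlgebra ℝ G) : gstar (a - b) = gstar a - gstar b :=
  congrArg ofCoeff Finsupp.mapDomain_sub

lemma gstar_zero : gstar (0 : MonoidAlgebra ℝ G) = 0 :=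
  congrArg ofCoeff Finsupp.mapDomain_zero

def laplacianTerm (g : G) : MonoidAlgebra ℝ G :=
  (1 - of ℝ G g) * gstar (1 - of ℝ G g)

lemma laplacianTerm_eq (g : G) : laplacianTerm g = 2 - of ℝ G g - of ℝ G g⁻¹ := by
  have hstar : gstar (1 - of ℝ G g) = 1 - of ℝ G g⁻¹ := by
    rw [gstar_sub, one_def, of_apply, of_apply, gstar_single, gstar_single, inv_one]
  rw [laplacianTerm, hstar, mul_sub, sub_mul, sub_mul, ← map_mul, mul_inv_cancel, map_one,
    one_mul, one_mul, mul_one, ← one_add_one_eq_two]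
  abel

end GroupRing

section PermutationRepresentation

variable {G X : Type*} [Group G] [MulAction G X]

local notation "ρ" => Representation.asAlgebraHom (Representation.ofMulAction ℝ G X)

def vectorState (x : X) : MonoidAlgebra ℝ G →ₗ[ℝ] ℝ where
  toFun ξ := (ρ ξ (single x 1)).coeff x
  map_add' _ _ := by simp
  map_smul' _ _ := by simp

lemma coeff_asAlgebraHom_gstar (ξ : MonoidAlgebra ℝ G) (u : MonoidAlgebra ℝ X) (x : X) :
    (ρ (gstar ξ) u).coeff x = u.coeff.sum fun y c => c * (ρ ξ (single x 1)).coeff y := by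
  induction ξ using MonoidAlgebra.induction_linear with
  | zero => simp [gstar_zero]
  | add a b ha hb => simp [gstar_add, ha, hb, mul_add, Finsupp.sum_add]
  | single g r =>
    classical
    simp +contextual [gstar_single, Representation.asAlgebraHom_single, Finsupp.single_apply,
      mul_comm]

lemma vectorState_gstar_mul_self_nonneg (x : X) (ξ : MonoidAlgebra ℝ G) :
    0 ≤ vectorState x (gstar ξ * ξ) := by
  change 0 ≤ (ρ (gstar ξ * ξ) (single x 1)).coeff x
  rw [map_mul, Module.End.mul_apply, coeff_asAlgebraHom_gstar]
  exact Finset.sum_nonneg fun y _ => mul_self_nonneg _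

lemma IsSOS.vectorState_nonneg {ξ : MonoidAlgebra ℝ G} (h : IsSOS ξ) (x : X) :
    0 ≤ vectorState x ξ := by
  obtain ⟨n, f, rfl⟩ := h
  rw [map_sum]
  exact Finset.sum_nonneg fun i _ => vectorState_gstar_mul_self_nonneg x (f i)

lemma coeff_asAlgebraHom_laplacianTerm (g : G) (u : MonoidAlgebra ℝ X) (y : X) :
    (ρ (laplacianTerm g) u).coeff y = 2 * u.coeff y - u.coeff (g⁻¹ • y) - u.coeff (g • y) := by
  simp [laplacianTerm_eq, map_ofNat]

/-- `ξ` acts at `x` like a graph Laplacian of degree `m`. These are the properties of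
`∑ (1 - g)(1 - g)*` at `x` that bound `φ_x(ξ²)` by `2 m²`, and they are stable under sums. -/
structure IsLaplacianAt (x : X) (m : ℝ) (ξ : MonoidAlgebra ℝ G) : Prop where
  vectorState_eq : vectorState x ξ = m
  neg_le_coeff : ∀ p ≠ x, -m ≤ (ρ ξ (single x 1)).coeff p
  coeff_le : ∀ (u : MonoidAlgebra ℝ X) (b : ℝ), (∀ p ≠ x, -b ≤ u.coeff p) →
    (ρ ξ u).coeff x ≤ m * (u.coeff x + b)

namespace IsLaplacianAt

variable {x : X}

lemma zero : IsLaplacianAt x 0 (0 : MonoidAlgebra ℝ G) where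
  vectorState_eq := map_zero _
  neg_le_coeff _ _ := by simp
  coeff_le _ _ _ := by simp

lemma add {m n : ℝ} {ξ η : MonoidAlgebra ℝ G} (hξ : IsLaplacianAt x m ξ)
    (hη : IsLaplacianAt x n η) : IsLaplacianAt x (m + n) (ξ + η) where
  vectorState_eq := by rw [map_add, hξ.vectorState_eq, hη.vectorState_eq]
  neg_le_coeff p hp := by
    have := add_le_add (hξ.neg_le_coeff p hp) (hη.neg_le_coeff p hp)
    simp only [map_add, LinearMap.add_apply, coeff_add, Finsupp.add_apply]
    linarith
  coeff_le u b hu := by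
    simpa [add_mul] using add_le_add (hξ.coeff_le u b hu) (hη.coeff_le u b hu)

lemma sum {ι : Type*} (s : Finset ι) {m : ι → ℝ} {ξ : ι → MonoidAlgebra ℝ G}
    (h : ∀ i ∈ s, IsLaplacianAt x (m i) (ξ i)) :
    IsLaplacianAt x (∑ i ∈ s, m i) (∑ i ∈ s, ξ i) := by
  classical
  induction s using Finset.induction_on with
  | empty => simpa using zero
  | insert i s hi ih =>
    rw [Finset.sum_insert hi, Finset.sum_insert hi]
    exact (h i (Finset.mem_insert_self i s)).add (ih fun j hj => h j (Finset.mem_insert_of_mem hj))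

lemma vectorState_mul_self_le {m : ℝ} {ξ : MonoidAlgebra ℝ G} (h : IsLaplacianAt x m ξ) :
    vectorState x (ξ * ξ) ≤ 2 * m ^ 2 := by
  have key := h.coeff_le (ρ ξ (single x 1)) m h.neg_le_coeff
  change (ρ (ξ * ξ) (single x 1)).coeff x ≤ _
  rw [map_mul, Module.End.mul_apply]
  change _ ≤ m * (vectorState x ξ + m) at key
  rw [h.vectorState_eq] at key
  linarith

end IsLaplacianAt

lemma isLaplacianAt_laplacianTerm_of_smul_eq {g : G} {x : X} (hg : g • x = x) :
    IsLaplacianAt x 0 (laplacianTerm g) where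
  vectorState_eq := by
    change (ρ _ _).coeff x = 0
    rw [coeff_asAlgebraHom_laplacianTerm, inv_smul_eq_iff.mpr hg.symm, hg]
    ring
  neg_le_coeff p hp := by
    classical
    have h₁ : x ≠ g⁻¹ • p := fun h => hp ((eq_inv_smul_iff.mp h).symm.trans hg)
    have h₂ : x ≠ g • p := fun h =>
      hp ((inv_smul_eq_iff.mpr h).symm.trans (inv_smul_eq_iff.mpr hg.symm))
    simp [coeff_asAlgebraHom_laplacianTerm, Ne.symm hp, h₁, h₂]
  coeff_le u b _ := by
    rw [coeff_asAlgebraHom_laplacianTerm, inv_smul_eq_iff.mpr hg.symm, hg]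
    linarith

lemma isLaplacianAt_laplacianTerm_of_smul_ne {g : G} {x : X} (hg : g • x ≠ x) :
    IsLaplacianAt x 2 (laplacianTerm g) where
  vectorState_eq := by
    classical
    change (ρ _ _).coeff x = 2
    have h₁ : x ≠ g⁻¹ • x := fun h => hg (eq_inv_smul_iff.mp h)
    simp [coeff_asAlgebraHom_laplacianTerm, h₁, Ne.symm hg]
  neg_le_coeff p hp := by
    classical
    rw [coeff_asAlgebraHom_laplacianTerm]
    simp only [coeff_single, Finsupp.single_apply, if_neg (Ne.symm hp)]
    split_ifs <;> norm_num
  coeff_le u b hu := by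
    have h₁ : g⁻¹ • x ≠ x := fun h => hg (inv_smul_eq_iff.mp h).symm
    rw [coeff_asAlgebraHom_laplacianTerm]
    linarith [hu _ h₁, hu _ hg]

end PermutationRepresentation

section NielsenAction

open FreeGroup

variable {α : Type*} [DecidableEq α]

lemma nL_apply_of_ne {i j m : α} (hm : m ≠ i) : nL i j (of m) = of m := by
  unfold nL
  split_ifs <;> simp [lA, hm]

lemma nR_apply_of_ne {i j m : α} (hm : m ≠ i) : nR i j (of m) = of m := by
  unfold nR
  split_ifs <;> simp [rA, hm]

lemma nL_apply_self_ne {i j : α} (hij : i ≠ j) : nL i j (of i) ≠ of i := by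
  simp [nL, hij, lA, of_ne_one]

lemma nR_apply_self_ne {i j : α} (hij : i ≠ j) : nR i j (of i) ≠ of i := by
  simp [nR, hij, rA, of_ne_one]

variable {K : ℕ}

lemma Del_eq_laplacianTerm_add (i j : Fin (K + 1)) (hj : j ≠ 0) :
    Del K i j hj = laplacianTerm (Lg i j hj) + laplacianTerm (Rg i j hj) :=
  rfl

lemma isLaplacianAt_Del_of_ne_zero {i j : Fin (K + 1)} (hj : j ≠ 0) (hi : i ≠ 0) :
    IsLaplacianAt (of (0 : Fin (K + 1))) 0 (Del K i j hj) := by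
  have hL : Lg i j hj • of (0 : Fin (K + 1)) = of 0 := nL_apply_of_ne hi.symm
  have hR : Rg i j hj • of (0 : Fin (K + 1)) = of 0 := nR_apply_of_ne hi.symm
  rw [Del_eq_laplacianTerm_add, ← add_zero (0 : ℝ)]
  exact (isLaplacianAt_laplacianTerm_of_smul_eq hL).add (isLaplacianAt_laplacianTerm_of_smul_eq hR)

lemma isLaplacianAt_Del_zero {j : Fin (K + 1)} (hj : j ≠ 0) :
    IsLaplacianAt (of (0 : Fin (K + 1))) 4 (Del K 0 j hj) := by
  have hL : Lg 0 j hj • of (0 : Fin (K + 1)) ≠ of 0 := nL_apply_self_ne hj.symm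
  have hR : Rg 0 j hj • of (0 : Fin (K + 1)) ≠ of 0 := nR_apply_self_ne hj.symm
  rw [Del_eq_laplacianTerm_add, show (4 : ℝ) = 2 + 2 by norm_num]
  exact (isLaplacianAt_laplacianTerm_of_smul_ne hL).add (isLaplacianAt_laplacianTerm_of_smul_ne hR)

lemma isLaplacianAt_DelFull (K : ℕ) :
    IsLaplacianAt (of (0 : Fin (K + 1))) (4 * K) (DelFull K) := by
  have hC : IsLaplacianAt (of (0 : Fin (K + 1))) (∑ _s : Fin K, 4) (DelC K K le_rfl) :=
    .sum _ fun s _ => isLaplacianAt_Del_zero _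
  have hN : IsLaplacianAt (of (0 : Fin (K + 1))) (∑ _i : Fin K, ∑ _j : Fin K, 0)
      (DelN K K le_rfl) :=
    .sum _ fun i _ => .sum _ fun j _ => isLaplacianAt_Del_of_ne_zero _ (idx_ne_zero _ i)
  have hΔ := hC.add hN
  rwa [Finset.sum_const, Finset.sum_const_zero, Finset.sum_const_zero, add_zero, Finset.card_univ,
    Fintype.card_fin, nsmul_eq_mul, mul_comm] at hΔ

end NielsenAction

end PRA

open PRA in
/-- If `k ≥ 2` and `Δ_k² − λ·Δ_k` is a sum of squares in `ℝ[A_k]`,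
then `λ ≤ 8k`. -/
theorem statement13 (k : ℕ) (hk : 2 ≤ k) (lam : ℝ)
    (h : IsSOS (DelFull k * DelFull k - lam • DelFull k)) :
    lam ≤ 8 * (k : ℝ) := by
  have hΔ := isLaplacianAt_DelFull k
  have hsos := h.vectorState_nonneg (FreeGroup.of (0 : Fin (k + 1)))
  rw [map_sub, map_smul, hΔ.vectorState_eq, smul_eq_mul] at hsos
  have hsq := hΔ.vectorState_mul_self_le
  have hk' : (0 : ℝ) < k := Nat.cast_pos.mpr (by omega)
  nlinarith
end
end

section
/- Let k ≥ 2, let V = (ℤ/3ℤ)^k \ {0}, and let SL_k(ℤ/3ℤ) act on ℂ^V by the permutation representation (g·f)(x) = f(g^{-1}x). Let v = Σ_{i=1}^k (δ_{e_i} − δ_{−e_i}) ∈ ℂ^V, where e_1,…,e_k are the standard basis vectors and δ_y is the indicator function of y. Then v is orthogonal to the constant functions, ‖v‖² = 2k, and for every elementary transvection matrix E = I + a·E_{ij} with i ≠ j and a = ±1, one has ‖E·v − v‖ = √(2/k)·‖v‖. -/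
/-!
Since `v` is a signed sum of point masses, pairing it with any `g` gives
`∑ₓ v x * g x = ∑ₘ (g eₘ - g (-eₘ))`; with `g = 1` and `g = v` this yields orthogonality to the
constants and `‖v‖² = 2k`. The map `x ↦ E⁻¹x` is the transvection with parameter `-a`, a
permutation of the vectors, so `‖E·v - v‖² = 2‖v‖² - 2 Re ⟨E·v, v⟩`. The transvection fixes
`eₘ` for `m ≠ j` and sends `eⱼ` to a vector with two nonzero coordinates, where `v` vanishes;
hence `⟨E·v, v⟩ = 2(k - 1)` and `‖E·v - v‖² = 4 = (2/k)‖v‖²`.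
-/

open Finset Matrix ComplexConjugate

theorem sum_sum_ite_eq_sub_mul {α ι S : Type*} [Fintype α] [DecidableEq α] [Fintype ι] [Ring S]
    (p q : ι → α) (g : α → S) :
    ∑ x, (∑ m, ((if x = p m then 1 else 0) - (if x = q m then 1 else 0))) * g x =
      ∑ m, (g (p m) - g (q m)) := by
  simp only [sum_mul, sub_mul, ite_mul, one_mul, zero_mul]
  rw [sum_comm]
  simp [sum_sub_distrib, sum_ite_eq']

theorem Complex.sum_normSq_comp_sub_self {α : Type*} [Fintype α] {T : α → α}
    (hT : T.Bijective) (f : α → ℂ) :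
    ∑ x, normSq (f (T x) - f x) =
      2 * ∑ x, normSq (f x) - 2 * (∑ x, f (T x) * conj (f x)).re := by
  simp only [Complex.normSq_sub, sum_sub_distrib, sum_add_distrib,
    hT.sum_comp (fun x => normSq (f x)), Complex.re_sum, ← mul_sum]
  ring

theorem Fintype.sum_subtype_ne_eq_sum {α M : Type*} [Fintype α] [DecidableEq α]
    [AddCommMonoid M] {f : α → M} {a : α} (ha : f a = 0) :
    ∑ x : {x // x ≠ a}, f x = ∑ x, f x := by
  rw [Fintype.sum_eq_add_sum_subtype_ne f a, ha, zero_add]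

theorem Pi.single_one_ne_neg_single_one {ι R : Type*} [DecidableEq ι] [Ring R] [NeZero (2 : R)]
    (m n : ι) : (Pi.single m 1 : ι → R) ≠ -Pi.single n 1 := by
  intro h
  have hm : (1 : R) = -(if m = n then 1 else 0) := by
    simpa [Pi.single_apply] using congrFun h m
  split_ifs at hm
  · exact two_ne_zero (by rw [← one_add_one_eq_two, eq_neg_iff_add_eq_zero.mp hm] : (2 : R) = 0)
  · rw [neg_zero] at hm
    exact two_ne_zero (by rw [← one_add_one_eq_two, hm, add_zero] : (2 : R) = 0)

theorem Pi.single_apply_eq_zero_or {ι R : Type*} [DecidableEq ι] [Zero R] {i j : ι}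
    (hij : i ≠ j) (m : ι) (b : R) :
    (Pi.single m b : ι → R) i = 0 ∨ (Pi.single m b : ι → R) j = 0 := by
  rcases eq_or_ne i m with rfl | him
  · simp [hij.symm]
  · simp [Pi.single_apply, him]

theorem Matrix.transvection_mulVec {n R : Type*} [Fintype n] [DecidableEq n] [CommRing R]
    (i j : n) (c : R) (x : n → R) : transvection i j c *ᵥ x = x + Pi.single i (c * x j) := by
  rw [transvection, add_mulVec, one_mulVec, single_mulVec, ← Pi.single, Pi.single]

theorem Matrix.transvection_mulVec_bijective {n R : Type*} [Fintype n] [DecidableEq n]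
    [CommRing R] {i j : n} (hij : i ≠ j) (c : R) :
    Function.Bijective (transvection i j c *ᵥ ·) := by
  refine Function.bijective_iff_has_inverse.mpr
    ⟨(transvection i j (-c) *ᵥ ·), fun x => ?_, fun x => ?_⟩ <;>
    simp [mulVec_mulVec, transvection_mul_transvection_same _ _ hij]

section SignedBasisSum

variable {ι R : Type*} [Fintype ι] [DecidableEq ι] [DecidableEq R]

section Ring

variable [Ring R]

def signedBasisSum (x : ι → R) : ℂ :=
  ∑ i, ((if x = Pi.single i 1 then 1 else 0) - (if x = -Pi.single i 1 then 1 else 0))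

theorem signedBasisSum_neg (x : ι → R) : signedBasisSum (-x) = -signedBasisSum x := by
  simp only [signedBasisSum, ← sum_neg_distrib, neg_sub, neg_eq_iff_eq_neg, neg_neg]

theorem signedBasisSum_zero : signedBasisSum (0 : ι → R) = 0 := by
  have h := signedBasisSum_neg (0 : ι → R)
  rwa [neg_zero, self_eq_neg] at h

theorem conj_signedBasisSum (x : ι → R) : conj (signedBasisSum x) = signedBasisSum x := by
  simp only [signedBasisSum, map_sum, map_sub, apply_ite conj, map_one, map_zero]

theorem signedBasisSum_single_one [NeZero (2 : R)] (m : ι) :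
    signedBasisSum (Pi.single m 1 : ι → R) = 1 := by
  have := nontrivial_of_ne (2 : R) 0 two_ne_zero
  rw [signedBasisSum, Fintype.sum_eq_single m]
  · simp [Pi.single_one_ne_neg_single_one]
  · intro n hn
    have hmn : (Pi.single m 1 : ι → R) ≠ Pi.single n 1 := fun h => by
      simpa [hn.symm] using congrFun h m
    simp [hmn, Pi.single_one_ne_neg_single_one]

theorem signedBasisSum_eq_zero_of_apply_ne_zero {i j : ι} (hij : i ≠ j) {x : ι → R}
    (hi : x i ≠ 0) (hj : x j ≠ 0) : signedBasisSum x = 0 := by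
  have hx : ∀ m b, x ≠ Pi.single m b := by
    rintro m b rfl
    exact (Pi.single_apply_eq_zero_or hij m b).elim hi hj
  refine sum_eq_zero fun m _ => ?_
  rw [if_neg (hx m 1), ← Pi.single_neg, if_neg (hx m (-1)), sub_zero]

variable [Fintype R]

theorem sum_signedBasisSum_mul (g : (ι → R) → ℂ) :
    ∑ x, signedBasisSum x * g x = ∑ m, (g (Pi.single m 1) - g (-Pi.single m 1)) :=
  sum_sum_ite_eq_sub_mul _ _ g

theorem sum_signedBasisSum : ∑ x : ι → R, signedBasisSum x = 0 := by
  simpa using sum_signedBasisSum_mul (ι := ι) (R := R) 1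

theorem sum_normSq_signedBasisSum [NeZero (2 : R)] :
    ∑ x : ι → R, Complex.normSq (signedBasisSum x) = 2 * Fintype.card ι := by
  have h := sum_signedBasisSum_mul (ι := ι) (R := R) signedBasisSum
  simp only [signedBasisSum_neg, signedBasisSum_single_one, sub_neg_eq_add, one_add_one_eq_two,
    sum_const, card_univ, nsmul_eq_mul] at h
  exact_mod_cast (by simpa [← Complex.mul_conj, conj_signedBasisSum, mul_comm] using h :
    ((∑ x : ι → R, Complex.normSq (signedBasisSum x) : ℝ) : ℂ) = (2 * Fintype.card ι : ℝ))

end Ring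

section CommRing

variable [CommRing R] [NeZero (2 : R)]

theorem sum_signedBasisSum_transvection_mulVec_single_one {i j : ι} (hij : i ≠ j) {c : R}
    (hc : c ≠ 0) :
    ∑ m, signedBasisSum (transvection i j c *ᵥ Pi.single m 1) = Fintype.card ι - 1 := by
  have hm : ∀ m, signedBasisSum (transvection i j c *ᵥ Pi.single m 1) =
      1 - if m = j then 1 else 0 := by
    intro m
    rcases eq_or_ne m j with rfl | hmj
    · have := nontrivial_of_ne (2 : R) 0 two_ne_zero
      rw [transvection_mulVec, signedBasisSum_eq_zero_of_apply_ne_zero hij] <;> simp [hij, hc]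
    · rw [transvection_mulVec, Pi.single_eq_of_ne' hmj, mul_zero, Pi.single_zero, add_zero,
        signedBasisSum_single_one, if_neg hmj, sub_zero]
  simp only [hm, sum_sub_distrib, sum_const, card_univ, nsmul_eq_mul, mul_one, sum_ite_eq']
  simp

theorem sum_normSq_signedBasisSum_transvection_mulVec_sub [Fintype R] {i j : ι} (hij : i ≠ j)
    {c : R} (hc : c ≠ 0) :
    ∑ x : ι → R,
      Complex.normSq (signedBasisSum (transvection i j c *ᵥ x) - signedBasisSum x) = 4 := by
  have hpair : ∑ x : ι → R,
      signedBasisSum (transvection i j c *ᵥ x) * conj (signedBasisSum x) =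
        2 * (Fintype.card ι - 1) := by
    simp only [conj_signedBasisSum, mul_comm (signedBasisSum (transvection i j c *ᵥ _))]
    rw [sum_signedBasisSum_mul, ← sum_signedBasisSum_transvection_mulVec_single_one hij hc,
      mul_sum]
    simp [mulVec_neg, signedBasisSum_neg, two_mul]
  rw [Complex.sum_normSq_comp_sub_self (transvection_mulVec_bijective hij c) signedBasisSum,
    sum_normSq_signedBasisSum, hpair]
  simp
  ring

end CommRing

end SignedBasisSum

theorem statement14_general (k : ℕ)
    (v : (Fin k → ZMod 3) → ℂ)
    (hv : v = fun x => ∑ i : Fin k,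
      ((if x = Pi.single i 1 then (1 : ℂ) else 0) - (if x = -Pi.single i 1 then 1 else 0)))
    (E : Matrix.SpecialLinearGroup (Fin k) (ZMod 3)) (i j : Fin k) (hij : i ≠ j)
    (a : ZMod 3) (ha : a = 1 ∨ a = -1)
    (hE : (E : Matrix (Fin k) (Fin k) (ZMod 3)) = 1 + a • Matrix.single i j 1) :
    (∑ x : {y : Fin k → ZMod 3 // y ≠ 0}, v x.val = 0) ∧
      (∑ x : {y : Fin k → ZMod 3 // y ≠ 0}, Complex.normSq (v x.val)) = 2 * k ∧
      Real.sqrt (∑ x : {y : Fin k → ZMod 3 // y ≠ 0},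
          Complex.normSq
            (v (((E⁻¹ : Matrix.SpecialLinearGroup (Fin k) (ZMod 3)) :
                Matrix (Fin k) (Fin k) (ZMod 3)).mulVec x.val) - v x.val))
        = Real.sqrt (2 / k) *
            Real.sqrt (∑ x : {y : Fin k → ZMod 3 // y ≠ 0}, Complex.normSq (v x.val)) := by
  obtain rfl : v = signedBasisSum := hv
  have : NeZero (2 : ZMod 3) := ⟨by decide⟩
  have hEinv : ((E⁻¹ : SpecialLinearGroup (Fin k) (ZMod 3)) : Matrix (Fin k) (Fin k) (ZMod 3)) =
      transvection i j (-a) := by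
    refine left_inv_eq_right_inv (a := (E : Matrix (Fin k) (Fin k) (ZMod 3))) ?_ ?_
    · exact_mod_cast congrArg
        ((↑) : SpecialLinearGroup (Fin k) (ZMod 3) → Matrix (Fin k) (Fin k) (ZMod 3))
        (inv_mul_cancel E)
    · rw [hE, smul_single, smul_eq_mul, mul_one, ← transvection,
        transvection_mul_transvection_same _ _ hij, add_neg_cancel, transvection_zero]
  have ha0 : -a ≠ 0 := by rcases ha with rfl | rfl <;> decide
  have hk0 : (k : ℝ) ≠ 0 := by have := i.pos; positivity
  simp only [hEinv, Fintype.sum_subtype_ne_eq_sum (f := signedBasisSum) signedBasisSum_zero,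
    Fintype.sum_subtype_ne_eq_sum (a := 0) (f := fun x : Fin k → ZMod 3 =>
      Complex.normSq (signedBasisSum x)) (by rw [signedBasisSum_zero, map_zero]),
    Fintype.sum_subtype_ne_eq_sum (a := 0) (f := fun x : Fin k → ZMod 3 =>
      Complex.normSq (signedBasisSum (transvection i j (-a) *ᵥ x) - signedBasisSum x))
      (by rw [mulVec_zero, signedBasisSum_zero, sub_zero, map_zero])]
  rw [sum_normSq_signedBasisSum_transvection_mulVec_sub hij ha0, sum_normSq_signedBasisSum,
    Fintype.card_fin, ← Real.sqrt_mul (by positivity)]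
  refine ⟨sum_signedBasisSum, rfl, ?_⟩
  congr 1
  field_simp
  norm_num

/-- Let `V = (ℤ/3ℤ)^k \ {0}` with the permutation action of `SL_k(ℤ/3ℤ)`
on `ℂ^V`, `(g·f)(x) = f(g⁻¹x)`, and let `v = Σ_i (δ_{e_i} − δ_{−e_i})`. Then `v` is
orthogonal to the constant functions, `‖v‖² = 2k`, and for every elementary transvection
`E = I + a·E_{ij}` (`i ≠ j`, `a = ±1`) one has `‖E·v − v‖ = √(2/k)·‖v‖`. -/
theorem statement14 (k : ℕ) (hk : 2 ≤ k)
    (v : (Fin k → ZMod 3) → ℂ)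
    (hv : v = fun x => ∑ i : Fin k,
      ((if x = Pi.single i 1 then (1 : ℂ) else 0) - (if x = -Pi.single i 1 then 1 else 0)))
    (E : Matrix.SpecialLinearGroup (Fin k) (ZMod 3)) (i j : Fin k) (hij : i ≠ j)
    (a : ZMod 3) (ha : a = 1 ∨ a = -1)
    (hE : (E : Matrix (Fin k) (Fin k) (ZMod 3)) = 1 + a • Matrix.single i j 1) :
    (∑ x : {y : Fin k → ZMod 3 // y ≠ 0}, v x.val = 0) ∧
      (∑ x : {y : Fin k → ZMod 3 // y ≠ 0}, Complex.normSq (v x.val)) = 2 * k ∧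
      Real.sqrt (∑ x : {y : Fin k → ZMod 3 // y ≠ 0},
          Complex.normSq
            (v (((E⁻¹ : Matrix.SpecialLinearGroup (Fin k) (ZMod 3)) :
                Matrix (Fin k) (Fin k) (ZMod 3)).mulVec x.val) - v x.val))
        = Real.sqrt (2 / k) *
            Real.sqrt (∑ x : {y : Fin k → ZMod 3 // y ≠ 0}, Complex.normSq (v x.val)) :=
  statement14_general k v hv E i j hij a ha hE
end
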